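/- Let S be a locally simply connected topological space and f : S → S a continuous map whose fixed point set Fix(f) is compact. Then there are only finitely many Nielsen equivalence classes of fixed points of f; that is, Fix(f) is the union of finitely many Nielsen equivalence classes. -/

import Mathlib

/-!
A fixed point `x` has a simply connected open neighbourhood `U`, and inside `U ∩ f⁻¹ U` a
path-connected neighbourhood `W`. For a fixed point `y ∈ W`, a path `α` from `x` to `y` in `W`
and its image `f ∘ α` both run in the simply connected `U`, so they are homotopic rel endpoints:
all fixed points near `x` are Nielsen equivalent to `x`. Compactness of `Fix f` then leaves
finitely many classes.
-/

/-- Two points `x, y` are Nielsen equivalent for `f` if both are fixed and there is a path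
`α` from `x` to `y` such that `f ∘ α` (as a path `β`) is homotopic to `α` rel endpoints. -/
def NielsenRel {S : Type*} [TopologicalSpace S] (f : S → S) (x y : S) : Prop :=
  f x = x ∧ f y = y ∧
    ∃ α β : Path x y, (∀ s, β s = f (α s)) ∧ α.Homotopic β

open Topology

section

variable {S : Type*} [TopologicalSpace S]

theorem Path.homotopic_of_forall_mem {x y : S} (U : Set S) [SimplyConnectedSpace U]
    (α β : Path x y) (hα : ∀ t, α t ∈ U) (hβ : ∀ t, β t ∈ U) : α.Homotopic β := by
  have hx : x ∈ U := by simpa using hα 0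
  have hy : y ∈ U := by simpa using hα 1
  let restrict (γ : Path x y) (hγ : ∀ t, γ t ∈ U) : Path (⟨x, hx⟩ : U) ⟨y, hy⟩ :=
    { toFun := fun t => ⟨γ t, hγ t⟩
      continuous_toFun := γ.continuous.subtype_mk _
      source' := by simp
      target' := by simp }
  exact (SimplyConnectedSpace.paths_homotopic (restrict α hα) (restrict β hβ)).map
    ⟨Subtype.val, continuous_subtype_val⟩

theorem nielsenRel_of_path_mem {f : S → S} (hf : Continuous f) {x y : S} (hx : f x = x)
    (hy : f y = y) (U : Set S) [SimplyConnectedSpace U] (α : Path x y) (hα : ∀ t, α t ∈ U)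
    (hfα : ∀ t, f (α t) ∈ U) : NielsenRel f x y :=
  ⟨hx, hy, α, (α.map hf).cast hx.symm hy.symm, fun _ => rfl,
    Path.homotopic_of_forall_mem U _ _ hα hfα⟩

theorem eventually_nielsenRel
    (hS : ∀ x : S, ∀ N ∈ 𝓝 x, ∃ U ⊆ N, IsOpen U ∧ x ∈ U ∧ SimplyConnectedSpace U)
    {f : S → S} (hf : Continuous f) {x : S} (hx : f x = x) :
    ∀ᶠ y in 𝓝 x, f y = y → NielsenRel f x y := by
  obtain ⟨U, -, hUopen, hxU, hUsc⟩ := hS x Set.univ Filter.univ_mem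
  have hV : U ∩ f ⁻¹' U ∈ 𝓝 x :=
    (hUopen.inter (hUopen.preimage hf)).mem_nhds ⟨hxU, by simpa [hx] using hxU⟩
  obtain ⟨W, hWV, hWopen, hxW, hWsc⟩ := hS x _ hV
  filter_upwards [hWopen.mem_nhds hxW] with y hyW hy
  obtain ⟨γ⟩ := PathConnectedSpace.joined (X := W) ⟨x, hxW⟩ ⟨y, hyW⟩
  exact nielsenRel_of_path_mem hf hx hy U (γ.map continuous_subtype_val)
    (fun t => (hWV (γ t).2).1) (fun t => (hWV (γ t).2).2)

end

/-- On a locally simply connected space, if `Fix f` is compact then there are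
only finitely many Nielsen classes: `Fix f` is covered by the classes of finitely many
fixed points. -/
theorem stmt_3 {S : Type*} [TopologicalSpace S]
    (hS : ∀ x : S, ∀ N ∈ nhds x, ∃ U ⊆ N, IsOpen U ∧ x ∈ U ∧ SimplyConnectedSpace U)
    (f : S → S) (hf : Continuous f) (hcpt : IsCompact {z : S | f z = z}) :
    ∃ T : Finset S, (∀ t ∈ T, f t = t) ∧
      ∀ x : S, f x = x → ∃ t ∈ T, NielsenRel f t x := by
  obtain ⟨T, hTfix, hcover⟩ := hcpt.elim_nhds_subcover (fun t => {y | f y = y → NielsenRel f t y})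
    fun t ht => eventually_nielsenRel hS hf ht
  refine ⟨T, hTfix, fun x hx => ?_⟩
  obtain ⟨t, ht, hxt⟩ := Set.mem_iUnion₂.1 (hcover hx)
  exact ⟨t, ht, hxt hx⟩
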